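/- Let X ⊆ E(M⁺) be a cyclic set of M⁺ with e ∈ X. Then γ_{M⁺}(X) − γ_M(X − e) − 1 = Σ_{Z ∈ Z(M⁺), Z ⊊ X} ( γ_M(Z − e) − γ_{M⁺}(Z) ), where the sum ranges over all cyclic flats Z of M⁺ properly contained in X. -/

import Mathlib

open Set Matroid
open scoped Classical

namespace Paper

variable {α : Type*}

/-- A circuit of a matroid: a minimal dependent set. -/
def Circuit (M : Matroid α) (C : Set α) : Prop :=
  M.Dep C ∧ ∀ D ⊂ C, M.Indep D

/-- A coloop: an element of the ground set lying in no circuit. -/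
def Coloop (M : Matroid α) (x : α) : Prop :=
  x ∈ M.E ∧ ∀ C, Circuit M C → x ∉ C

/-- The set of coloops of a matroid. -/
def coloops (M : Matroid α) : Set α := {x | Coloop M x}

/-- A cyclic set: a subset of the ground set each of whose elements lies in a
circuit contained in the set (equivalently, the restriction has no coloops). -/
def Cyclic (M : Matroid α) (X : Set α) : Prop :=
  X ⊆ M.E ∧ ∀ x ∈ X, ∃ C, Circuit M C ∧ C ⊆ X ∧ x ∈ C

/-- A cyclic flat: a cyclic set that is also a flat. -/
def CyclicFlat (M : Matroid α) (X : Set α) : Prop :=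
  Cyclic M X ∧ M.IsFlat X

/-- The rank of a set: the largest cardinality of an independent subset. -/
noncomputable def rk (M : Matroid α) (X : Set α) : ℕ :=
  sSup (Set.ncard '' {I | M.Indep I ∧ I ⊆ X})

/-- The nullity of a set: `n(X) = |X| − r(X)`. -/
noncomputable def nullity (M : Matroid α) (X : Set α) : ℤ :=
  (X.ncard : ℤ) - rk M X

/-- Deletion of a single element: `M \ e`. -/
noncomputable def deleteElem (M : Matroid α) (e : α) : Matroid α :=
  M ↾ (M.E \ {e})

variable [Fintype α] [DecidableEq α]

/-- The `γ` function: `γ_M(X) = n(X) − Σ_{Z ∈ Z(M), Z ⊊ X} γ_M(Z)`. -/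
noncomputable def gamma (M : Matroid α) (X : Finset α) : ℤ :=
  nullity M ↑X -
    ∑ Z ∈ (Finset.univ.filter (fun Z : Finset α => CyclicFlat M ↑Z ∧ Z ⊂ X)).attach,
      gamma M Z.1
termination_by X.card
decreasing_by
  exact Finset.card_lt_card (Finset.mem_filter.mp Z.2).2.2

end Paper

/-!
Unfolding `γ` at `X` on both sides and using `n_{M⁺}(X) = n_M(X − e) + 1` (as `X` is cyclic,
`e` lies in the closure of `X − e`), the identity reduces to
`Σ_{Z ∈ Z(M⁺), Z ⊊ X} γ_M(Z − e) = Σ_{F ∈ Z(M), F ⊊ X − e} γ_M(F)`.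
For a cyclic flat `Z` of `M⁺`, `Z − e` is a flat of `M`. If it is not cyclic, `γ_M` vanishes on
it: a flat `Y` has the same nullity as its cyclic part `W` (the union of the circuits inside `Y`),
and the cyclic flats properly inside `Y` are `W` and those properly inside `W`. The remaining
maps `Z ↦ Z − e` form a bijection onto the cyclic flats of `M` properly inside `X − e`, with
inverse `F ↦ cl_{M⁺}(F)`.

Below, `M⁺` is the matroid `M` and `M` is `deleteElem M e`.
-/

namespace Paper

section Matroid

variable {α : Type*} {M : Matroid α} {C F I R W X Y Z : Set α} {e x : α}

theorem circuit_iff_isCircuit : Circuit M C ↔ M.IsCircuit C := by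
  rw [isCircuit_iff_forall_ssubset]
  rfl

theorem Cyclic.exists_isCircuit (hX : Cyclic M X) (hx : x ∈ X) :
    ∃ C ⊆ X, M.IsCircuit C ∧ x ∈ C := by
  obtain ⟨C, hC, hCX, hxC⟩ := hX.2 x hx
  exact ⟨C, hCX, circuit_iff_isCircuit.1 hC, hxC⟩

theorem Cyclic.closure_sdiff_singleton (hX : Cyclic M X) (x : α) :
    M.closure (X \ {x}) = M.closure X := by
  by_cases hx : x ∈ X
  · obtain ⟨C, hCX, hC, hxC⟩ := hX.exists_isCircuit hx
    exact closure_sdiff_singleton_eq_closure <| M.closure_subset_closure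
      (sdiff_subset_sdiff_left hCX) (hC.mem_closure_sdiff_singleton_of_mem hxC)
  · rw [sdiff_singleton_eq_self hx]

theorem Cyclic.closure (hX : Cyclic M X) : Cyclic M (M.closure X) := by
  refine ⟨M.closure_subset_ground X, fun x hx => ?_⟩
  by_cases hxX : x ∈ X
  · obtain ⟨C, hCX, hC, hxC⟩ := hX.exists_isCircuit hxX
    exact ⟨C, circuit_iff_isCircuit.2 hC, hCX.trans (M.subset_closure X hX.1), hxC⟩
  · obtain ⟨C, hCX, hC, hxC⟩ := (mem_closure_iff_exists_isCircuit hxX).1 hx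
    exact ⟨C, circuit_iff_isCircuit.2 hC,
      hCX.trans (insert_subset hx (M.subset_closure X hX.1)), hxC⟩

theorem sdiff_singleton_ssubset_sdiff_singleton_of_isFlat (hZ : M.IsFlat Z) (hX : Cyclic M X)
    (hZX : Z ⊂ X) (e : α) : Z \ {e} ⊂ X \ {e} := by
  refine (sdiff_subset_sdiff_left hZX.subset).ssubset_of_ne fun h => hZX.not_subset ?_
  calc X ⊆ M.closure (X \ {e}) := hX.closure_sdiff_singleton e ▸ M.subset_closure X hX.1
    _ = M.closure (Z \ {e}) := by rw [h]
    _ ⊆ M.closure Z := M.closure_subset_closure sdiff_subset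
    _ = Z := hZ.closure

theorem deleteElem_eq_delete : deleteElem M e = M ＼ {e} := rfl

theorem cyclic_deleteElem_iff : Cyclic (deleteElem M e) X ↔ Cyclic M X ∧ e ∉ X := by
  simp only [Cyclic, circuit_iff_isCircuit, deleteElem_eq_delete, delete_ground,
    delete_isCircuit_iff, subset_sdiff, disjoint_singleton_right]
  constructor
  · rintro ⟨⟨hXE, heX⟩, h⟩
    refine ⟨⟨hXE, fun x hx => ?_⟩, heX⟩
    obtain ⟨C, ⟨hC, -⟩, hCX, hxC⟩ := h x hx
    exact ⟨C, hC, hCX, hxC⟩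
  · rintro ⟨⟨hXE, h⟩, heX⟩
    refine ⟨⟨hXE, heX⟩, fun x hx => ?_⟩
    obtain ⟨C, hC, hCX, hxC⟩ := h x hx
    exact ⟨C, ⟨hC, fun heC => heX (hCX heC)⟩, hCX, hxC⟩

theorem isFlat_deleteElem_sdiff_singleton (hZ : M.IsFlat Z) :
    (deleteElem M e).IsFlat (Z \ {e}) := by
  rw [isFlat_iff_closure_eq, deleteElem_eq_delete, delete_closure_eq, sdiff_idem]
  have hcl : M.closure (Z \ {e}) ⊆ Z :=
    (M.closure_subset_closure sdiff_subset).trans hZ.closure.subset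
  refine (sdiff_subset_sdiff_left hcl).antisymm ?_
  exact subset_sdiff.2
    ⟨M.subset_closure _ (sdiff_subset.trans hZ.subset_ground), disjoint_sdiff_left⟩

theorem closure_sdiff_singleton_of_isFlat_deleteElem (hF : (deleteElem M e).IsFlat F) :
    M.closure F \ {e} = F := by
  have heF : e ∉ F := fun h => (hF.subset_ground h).2 rfl
  simpa [deleteElem_eq_delete, sdiff_singleton_eq_self heF] using hF.closure

theorem closure_ssubset_of_isFlat_deleteElem (hF : (deleteElem M e).IsFlat F)
    (hFX : F ⊂ X \ {e}) (heX : e ∈ X) : M.closure F ⊂ X := by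
  have hclF := closure_sdiff_singleton_of_isFlat_deleteElem hF
  refine ssubset_of_subset_of_ne (fun x hx => ?_) fun h => hFX.ne (by rw [← hclF, h])
  obtain rfl | hne := eq_or_ne x e
  · exact heX
  · exact (hFX.subset (hclF.subset ⟨hx, hne⟩)).1

theorem rk_eq_ncard_of_isBasis' (hI : M.IsBasis' I X) (hX : X.Finite) : rk M X = I.ncard := by
  refine IsGreatest.csSup_eq ⟨⟨I, ⟨hI.indep, hI.subset⟩, rfl⟩, ?_⟩
  rintro _ ⟨J, ⟨hJ, hJX⟩, rfl⟩
  have hJI : J.encard ≤ I.encard := (hJ.encard_le_eRk_of_subset hJX).trans_eq hI.eRk_eq_encard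
  rwa [← (hX.subset hJX).cast_ncard_eq, ← (hX.subset hI.subset).cast_ncard_eq,
    Nat.cast_le] at hJI

theorem rk_eq_toNat_eRk (hX : X.Finite) : rk M X = (M.eRk X).toNat := by
  obtain ⟨I, hI⟩ := M.exists_isBasis' X
  rw [rk_eq_ncard_of_isBasis' hI hX, hI.eRk_eq_encard, ncard_def]

theorem rk_eq_of_closure_eq (hX : X.Finite) (hY : Y.Finite) (h : M.closure X = M.closure Y) :
    rk M X = rk M Y := by
  rw [rk_eq_toNat_eRk hX, rk_eq_toNat_eRk hY, ← eRk_closure_eq, h, eRk_closure_eq]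

theorem rk_restrict_of_subset (hXR : X ⊆ R) : rk (M ↾ R) X = rk M X := by
  simp only [rk, restrict_indep_iff, and_assoc]
  congr 2
  ext I
  exact and_congr_right fun _ => ⟨fun h => h.2, fun h => ⟨h.trans hXR, h⟩⟩

theorem rk_eq_rk_add_ncard_sdiff (hWY : W ⊆ Y) (hY : Y ⊆ M.E) (hYfin : Y.Finite)
    (hcirc : ∀ C ⊆ Y, M.IsCircuit C → C ⊆ W) : rk M Y = rk M W + (Y \ W).ncard := by
  obtain ⟨I, hI⟩ := M.exists_isBasis W (hWY.trans hY)
  have hJY : I ∪ (Y \ W) ⊆ Y := union_subset (hI.subset.trans hWY) sdiff_subset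
  have hJ : M.Indep (I ∪ (Y \ W)) := by
    refine (indep_iff_forall_subset_not_isCircuit (hJY.trans hY)).2 fun C hCJ hC => ?_
    have hCW := hcirc C (hCJ.trans hJY) hC
    have hCI : C ⊆ I := fun c hc => (hCJ hc).resolve_right fun h => h.2 (hCW hc)
    exact hC.dep.not_indep (hI.indep.subset hCI)
  have hJbasis : M.IsBasis (I ∪ (Y \ W)) Y := by
    refine hJ.isBasis_of_subset_of_subset_closure hJY fun y hy => ?_
    by_cases hyW : y ∈ W
    · exact M.closure_subset_closure subset_union_left (hI.subset_closure hyW)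
    · exact M.subset_closure _ hJ.subset_ground (Or.inr ⟨hy, hyW⟩)
  rw [rk_eq_ncard_of_isBasis' hJbasis.isBasis' hYfin,
    rk_eq_ncard_of_isBasis' hI.isBasis' (hYfin.subset hWY),
    ncard_union_eq (disjoint_sdiff_right.mono_left hI.subset) (hYfin.subset (hI.subset.trans hWY))
      (hYfin.subset sdiff_subset)]

theorem nullity_eq_of_forall_isCircuit_subset (hWY : W ⊆ Y) (hY : Y ⊆ M.E) (hYfin : Y.Finite)
    (hcirc : ∀ C ⊆ Y, M.IsCircuit C → C ⊆ W) : nullity M W = nullity M Y := by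
  have hcard := ncard_sdiff_add_ncard_of_subset hWY hYfin
  rw [nullity, nullity, rk_eq_rk_add_ncard_sdiff hWY hY hYfin hcirc, ← hcard]
  push_cast
  ring

theorem Cyclic.nullity_eq_nullity_deleteElem_add_one (hX : Cyclic M X) (hXfin : X.Finite)
    (heX : e ∈ X) : nullity M X = nullity (deleteElem M e) (X \ {e}) + 1 := by
  have hrk : rk (deleteElem M e) (X \ {e}) = rk M X := by
    rw [deleteElem, rk_restrict_of_subset (sdiff_subset_sdiff_left hX.1)]
    exact rk_eq_of_closure_eq (hXfin.subset sdiff_subset) hXfin (hX.closure_sdiff_singleton e)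
  rw [nullity, nullity, hrk, ← ncard_sdiff_singleton_add_one heX hXfin]
  push_cast
  ring

end Matroid

variable {α : Type*} {N : Matroid α} {Y Z : Finset α}

noncomputable def cyclicPart (N : Matroid α) (Y : Finset α) : Finset α :=
  Y.filter fun x => ∃ C ⊆ (Y : Set α), N.IsCircuit C ∧ x ∈ C

theorem cyclicPart_subset : cyclicPart N Y ⊆ Y := Finset.filter_subset _ _

theorem subset_cyclicPart_of_isCircuit {C : Set α} (hC : N.IsCircuit C) (hCY : C ⊆ Y) :
    C ⊆ cyclicPart N Y := fun _ hx =>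
  Finset.mem_filter.2 ⟨hCY hx, C, hCY, hC, hx⟩

theorem Cyclic.subset_cyclicPart (hZ : Cyclic N Z) (hZY : Z ⊆ Y) : Z ⊆ cyclicPart N Y :=
  fun x hx => by
    obtain ⟨C, hCZ, hC, hxC⟩ := hZ.exists_isCircuit hx
    exact Finset.mem_coe.1
      (subset_cyclicPart_of_isCircuit hC (hCZ.trans (Finset.coe_subset.2 hZY)) hxC)

theorem cyclic_cyclicPart (hY : ↑Y ⊆ N.E) : Cyclic N (cyclicPart N Y) := by
  refine ⟨(Finset.coe_subset.2 cyclicPart_subset).trans hY, fun x hx => ?_⟩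
  obtain ⟨-, C, hCY, hC, hxC⟩ := Finset.mem_filter.1 hx
  exact ⟨C, circuit_iff_isCircuit.2 hC, subset_cyclicPart_of_isCircuit hC hCY, hxC⟩

theorem isFlat_cyclicPart (hY : N.IsFlat Y) : N.IsFlat (cyclicPart N Y) := by
  have hWY : (cyclicPart N Y : Set α) ⊆ Y := Finset.coe_subset.2 cyclicPart_subset
  refine isFlat_iff_closure_eq.2 <|
    (N.subset_closure _ (hWY.trans hY.subset_ground)).antisymm' fun x hx => ?_
  by_contra hxW
  have hxY : x ∈ (Y : Set α) := hY.closure ▸ N.closure_subset_closure hWY hx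
  obtain ⟨C, hCW, hC, hxC⟩ := (mem_closure_iff_exists_isCircuit hxW).1 hx
  exact hxW (subset_cyclicPart_of_isCircuit hC (hCW.trans (insert_subset hxY hWY)) hxC)

theorem nullity_cyclicPart (hY : ↑Y ⊆ N.E) : nullity N (cyclicPart N Y) = nullity N Y :=
  nullity_eq_of_forall_isCircuit_subset (Finset.coe_subset.2 cyclicPart_subset) hY
    Y.finite_toSet fun _ hCY hC => subset_cyclicPart_of_isCircuit hC hCY

variable [Fintype α] [DecidableEq α] {M : Matroid α} {e : α} {F X : Finset α}

noncomputable abbrev cyclicFlatsBelow (N : Matroid α) (X : Finset α) : Finset (Finset α) :=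
  Finset.univ.filter fun Z : Finset α => CyclicFlat N ↑Z ∧ Z ⊂ X

@[simp]
theorem mem_cyclicFlatsBelow : Z ∈ cyclicFlatsBelow N X ↔ CyclicFlat N ↑Z ∧ Z ⊂ X := by
  simp

theorem gamma_eq (N : Matroid α) (X : Finset α) :
    gamma N X = nullity N ↑X - ∑ Z ∈ cyclicFlatsBelow N X, gamma N Z := by
  rw [gamma, Finset.sum_attach]

theorem cyclicFlatsBelow_eq_insert_cyclicPart (hY : N.IsFlat Y) (hnc : ¬Cyclic N Y) :
    cyclicFlatsBelow N Y = insert (cyclicPart N Y) (cyclicFlatsBelow N (cyclicPart N Y)) := by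
  have hWcyc := cyclic_cyclicPart hY.subset_ground
  have hWY : cyclicPart N Y ⊂ Y :=
    cyclicPart_subset.ssubset_of_ne fun h => hnc (h ▸ hWcyc)
  ext Z
  simp only [Finset.mem_insert, mem_cyclicFlatsBelow]
  constructor
  · rintro ⟨hZ, hZY⟩
    exact (eq_or_ne Z _).imp_right fun hne =>
      ⟨hZ, (hZ.1.subset_cyclicPart hZY.subset).ssubset_of_ne hne⟩
  · rintro (rfl | ⟨hZ, hZW⟩)
    · exact ⟨⟨hWcyc, isFlat_cyclicPart hY⟩, hWY⟩
    · exact ⟨hZ, hZW.trans hWY⟩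

theorem gamma_eq_zero_of_isFlat_of_not_cyclic (hY : N.IsFlat Y) (hnc : ¬Cyclic N Y) :
    gamma N Y = 0 := by
  have hW : cyclicPart N Y ∉ cyclicFlatsBelow N (cyclicPart N Y) := by simp
  rw [gamma_eq, cyclicFlatsBelow_eq_insert_cyclicPart hY hnc, Finset.sum_insert hW,
    gamma_eq N (cyclicPart N Y), nullity_cyclicPart hY.subset_ground]
  ring

theorem erase_mem_cyclicFlatsBelow_deleteElem (hX : Cyclic M X)
    (hZ : Z ∈ cyclicFlatsBelow M X) (hZe : Cyclic (deleteElem M e) ↑(Z.erase e)) :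
    Z.erase e ∈ cyclicFlatsBelow (deleteElem M e) (X.erase e) := by
  obtain ⟨⟨-, hZflat⟩, hZX⟩ := mem_cyclicFlatsBelow.1 hZ
  refine mem_cyclicFlatsBelow.2 ⟨⟨hZe, ?_⟩, ?_⟩
  · simpa only [Finset.coe_erase] using isFlat_deleteElem_sdiff_singleton hZflat
  · rw [← Finset.coe_ssubset, Finset.coe_erase, Finset.coe_erase]
    exact sdiff_singleton_ssubset_sdiff_singleton_of_isFlat hZflat hX (Finset.coe_ssubset.2 hZX) e

theorem toFinset_closure_mem_cyclicFlatsBelow (heX : e ∈ X)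
    (hF : F ∈ cyclicFlatsBelow (deleteElem M e) (X.erase e)) :
    (M.closure ↑F).toFinset ∈ cyclicFlatsBelow M X := by
  obtain ⟨⟨hFcyc, hFflat⟩, hFX⟩ := mem_cyclicFlatsBelow.1 hF
  refine mem_cyclicFlatsBelow.2 ⟨?_, ?_⟩
  · rw [CyclicFlat, coe_toFinset]
    exact ⟨(cyclic_deleteElem_iff.1 hFcyc).1.closure, isFlat_closure _⟩
  · rw [← Finset.coe_ssubset, coe_toFinset]
    rw [← Finset.coe_ssubset, Finset.coe_erase] at hFX
    exact closure_ssubset_of_isFlat_deleteElem hFflat hFX heX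

theorem toFinset_closure_erase (hZ : CyclicFlat M ↑Z) :
    (M.closure ↑(Z.erase e)).toFinset = Z := by
  rw [← Finset.coe_inj, coe_toFinset, Finset.coe_erase, hZ.1.closure_sdiff_singleton,
    hZ.2.closure]

theorem erase_toFinset_closure (hF : (deleteElem M e).IsFlat ↑F) :
    (M.closure ↑F).toFinset.erase e = F := by
  rw [← Finset.coe_inj, Finset.coe_erase, coe_toFinset,
    closure_sdiff_singleton_of_isFlat_deleteElem hF]

theorem sum_gamma_deleteElem_erase (hX : Cyclic M X) (heX : e ∈ X) :
    ∑ Z ∈ cyclicFlatsBelow M X, gamma (deleteElem M e) (Z.erase e) =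
      ∑ F ∈ cyclicFlatsBelow (deleteElem M e) (X.erase e), gamma (deleteElem M e) F := by
  rw [← Finset.sum_filter_of_ne (p := fun Z => Cyclic (deleteElem M e) ↑(Z.erase e))]
  · refine Finset.sum_nbij' (fun Z => Z.erase e) (fun F => (M.closure ↑F).toFinset)
      (fun Z hZ => ?_) (fun F hF => ?_) (fun Z hZ => ?_) (fun F hF => ?_) fun _ _ => rfl
    · obtain ⟨hZ, hZe⟩ := Finset.mem_filter.1 hZ
      exact erase_mem_cyclicFlatsBelow_deleteElem hX hZ hZe
    · obtain ⟨⟨hFcyc, hFflat⟩, -⟩ := mem_cyclicFlatsBelow.1 hF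
      refine Finset.mem_filter.2 ⟨toFinset_closure_mem_cyclicFlatsBelow heX hF, ?_⟩
      rwa [erase_toFinset_closure hFflat]
    · exact toFinset_closure_erase (mem_cyclicFlatsBelow.1 (Finset.mem_filter.1 hZ).1).1
    · exact erase_toFinset_closure (mem_cyclicFlatsBelow.1 hF).1.2
  · intro Z hZ hne
    by_contra hnc
    refine hne (gamma_eq_zero_of_isFlat_of_not_cyclic ?_ hnc)
    simpa only [Finset.coe_erase] using
      isFlat_deleteElem_sdiff_singleton (mem_cyclicFlatsBelow.1 hZ).1.2

theorem statement_11_general (M : Matroid α) (e : α)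
    (X : Finset α) (hcyc : Cyclic M ↑X) (heX : e ∈ X) :
    gamma M X - gamma (deleteElem M e) (X.erase e) - 1 =
      ∑ Z ∈ Finset.univ.filter (fun Z : Finset α => CyclicFlat M ↑Z ∧ Z ⊂ X),
        (gamma (deleteElem M e) (Z.erase e) - gamma M Z) := by
  rw [gamma_eq M X, gamma_eq (deleteElem M e) (X.erase e), Finset.coe_erase,
    hcyc.nullity_eq_nullity_deleteElem_add_one X.finite_toSet heX, Finset.sum_sub_distrib,
    sum_gamma_deleteElem_erase hcyc heX]
  ring

theorem statement_11 (M : Matroid α) (e : α) (he : e ∈ M.E)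
    (X : Finset α) (hX : ↑X ⊆ M.E) (hcyc : Cyclic M ↑X) (heX : e ∈ X) :
    gamma M X - gamma (deleteElem M e) (X.erase e) - 1 =
      ∑ Z ∈ Finset.univ.filter (fun Z : Finset α => CyclicFlat M ↑Z ∧ Z ⊂ X),
        (gamma (deleteElem M e) (Z.erase e) - gamma M Z) :=
  statement_11_general M e X hcyc heX

end Paper
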